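/- Let ε = 1/10, ξ ∈ ℝ³ with ξ ≠ 0, and let P ⊂ ℝ³ be a 2-dimensional plane or sphere with induced surface measure dS. Then there is a constant C, independent of P and ξ, such that ∫_P dS(η) / (|ξ/2 − η| · |ξ − η|^{2−ε} · |η|^{2−ε}) ≤ C / |ξ|^{3−2ε}. -/

import Mathlib

/-!
A plane is the image of a square under a Lipschitz map, and a spherical cap is the image of a
disc in its tangent plane under the radial projection onto the sphere, which is 1-Lipschitz
outside the ball. Hence `ν = μH[2]` restricted to `P` satisfies `ν (B(x, r)) ≤ A r²` with `A`
independent of `P`. For any such measure, summing over dyadic annuli gives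
`∫_{B(x₀, ρ)} |η - x₀|^{-a} dν ≲ A ρ^{2-a}` for `a < 2` and `∫_{|η| > R} |η|^{-b} dν ≲ A R^{2-b}`
for `b > 2`. With `|ξ| = 4r` and `p = 2 - ε`, split space into the balls of radius `r` around
the singular points `ξ/2`, `0`, `ξ` (each carries one singular factor of the kernel), the rest of
`B(0, 8r)` (where the kernel is `≲ r^{-1-2p}`) and the complement of `B(0, 8r)` (where it is
`≲ |η|^{-1-2p}`); each piece contributes `≲ A r^{1-2p} = A' |ξ|^{-(3-2ε)}`.
-/

open MeasureTheory Metric Set Module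
open scoped ENNReal NNReal RealInnerProductSpace

def IsUpperRegular {X : Type*} [PseudoMetricSpace X] [MeasurableSpace X]
    (ν : Measure X) (s A : ℝ) : Prop :=
  ∀ x r, 0 < r → ν (closedBall x r) ≤ ENNReal.ofReal (A * r ^ s)

theorem ENNReal.tsum_ofReal_mul_pow {C q : ℝ} (hC : 0 ≤ C) (hq₀ : 0 ≤ q) (hq₁ : q < 1) :
    ∑' k : ℕ, ENNReal.ofReal (C * q ^ k) = ENNReal.ofReal (C / (1 - q)) := by
  rw [← ENNReal.ofReal_tsum_of_nonneg (fun k => by positivity)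
    ((summable_geometric_of_lt_one hq₀ hq₁).mul_left C), tsum_mul_left,
    tsum_geometric_of_lt_one hq₀ hq₁, div_eq_mul_inv]

theorem setLIntegral_ofReal_le_of_le_mul {X : Type*} [MeasurableSpace X] {ν : Measure X}
    {S : Set X} {f g : X → ℝ} {M B : ℝ} (hS : MeasurableSet S) (hM : 0 ≤ M)
    (hfg : ∀ x ∈ S, f x ≤ M * g x) (hg : ∫⁻ x in S, ENNReal.ofReal (g x) ∂ν ≤ ENNReal.ofReal B) :
    ∫⁻ x in S, ENNReal.ofReal (f x) ∂ν ≤ ENNReal.ofReal (M * B) :=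
  calc ∫⁻ x in S, ENNReal.ofReal (f x) ∂ν
      ≤ ∫⁻ x in S, ENNReal.ofReal M * ENNReal.ofReal (g x) ∂ν :=
        setLIntegral_mono' hS fun x hx => by
          rw [← ENNReal.ofReal_mul hM]; exact ENNReal.ofReal_le_ofReal (hfg x hx)
    _ = ENNReal.ofReal M * ∫⁻ x in S, ENNReal.ofReal (g x) ∂ν :=
        lintegral_const_mul' _ _ ENNReal.ofReal_ne_top
    _ ≤ ENNReal.ofReal (M * B) := by rw [ENNReal.ofReal_mul hM]; gcongr

section Annuli

variable {X : Type*} [PseudoMetricSpace X]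

theorem closedBall_subset_union_iUnion_annuli (x₀ : X) (ρ : ℝ) :
    closedBall x₀ ρ ⊆ closedBall x₀ 0 ∪
      ⋃ k : ℕ, closedBall x₀ (2 * (ρ / 2 * (1 / 2) ^ k)) \ ball x₀ (ρ / 2 * (1 / 2) ^ k) := by
  intro η hη
  rcases (dist_nonneg : 0 ≤ dist η x₀).eq_or_lt with h | h
  · exact Or.inl (mem_closedBall.2 h.ge)
  obtain ⟨k, hk₁, hk₂⟩ := exists_nat_pow_near ((one_le_div h).2 (mem_closedBall.1 hη)) one_lt_two
  rw [le_div_iff₀ h] at hk₁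
  rw [div_lt_iff₀ h, pow_succ] at hk₂
  refine Or.inr (mem_iUnion.2 ⟨k, mem_closedBall.2 ?_, fun hk => ?_⟩)
  · rw [one_div_pow]
    field_simp
    linarith
  · rw [mem_ball, one_div_pow] at hk
    field_simp at hk
    linarith

theorem compl_closedBall_subset_iUnion_annuli (x₀ : X) {R : ℝ} (hR : 0 < R) :
    (closedBall x₀ R)ᶜ ⊆ ⋃ k : ℕ, closedBall x₀ (2 * (R * 2 ^ k)) \ ball x₀ (R * 2 ^ k) := by
  intro η hη
  have hη' : 1 ≤ dist η x₀ / R := (one_le_div hR).2 (not_le.1 (mt mem_closedBall.2 hη)).le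
  obtain ⟨k, hk₁, hk₂⟩ := exists_nat_pow_near hη' one_lt_two
  rw [le_div_iff₀ hR] at hk₁
  rw [div_lt_iff₀ hR, pow_succ] at hk₂
  exact mem_iUnion.2 ⟨k, mem_closedBall.2 (by linarith),
    fun hk => (mem_ball.1 hk).not_ge (by linarith)⟩

variable [MeasurableSpace X] {ν : Measure X} {s A a : ℝ}

theorem IsUpperRegular.setLIntegral_annulus_le (hν : IsUpperRegular ν s A) (ha : 0 ≤ a)
    (x₀ : X) {r : ℝ} (hr : 0 < r) :
    ∫⁻ η in closedBall x₀ (2 * r) \ ball x₀ r, ENNReal.ofReal (dist η x₀ ^ (-a)) ∂ν ≤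
      ENNReal.ofReal (2 ^ s * A * r ^ (s - a)) :=
  calc ∫⁻ η in closedBall x₀ (2 * r) \ ball x₀ r, ENNReal.ofReal (dist η x₀ ^ (-a)) ∂ν
      ≤ ∫⁻ _ in closedBall x₀ (2 * r) \ ball x₀ r, ENNReal.ofReal (r ^ (-a)) ∂ν :=
        setLIntegral_mono measurable_const fun η hη => ENNReal.ofReal_le_ofReal <|
          Real.rpow_le_rpow_of_nonpos hr (not_lt.1 hη.2) (neg_nonpos.2 ha)
    _ ≤ ENNReal.ofReal (r ^ (-a)) * ENNReal.ofReal (A * (2 * r) ^ s) := by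
        rw [setLIntegral_const]
        gcongr
        exact (measure_mono sdiff_subset).trans (hν x₀ _ (by positivity))
    _ = ENNReal.ofReal (2 ^ s * A * r ^ (s - a)) := by
        rw [← ENNReal.ofReal_mul (by positivity), Real.mul_rpow zero_le_two hr.le,
          sub_eq_neg_add, Real.rpow_add hr]
        ring_nf

theorem IsUpperRegular.setLIntegral_iUnion_annuli_le (hν : IsUpperRegular ν s A) (hA : 0 ≤ A)
    (ha : 0 ≤ a) (x₀ : X) {ρ t : ℝ} (hρ : 0 < ρ) (ht : 0 < t) (hq : t ^ (s - a) < 1) :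
    ∫⁻ η in ⋃ k : ℕ, closedBall x₀ (2 * (ρ * t ^ k)) \ ball x₀ (ρ * t ^ k),
        ENNReal.ofReal (dist η x₀ ^ (-a)) ∂ν ≤
      ENNReal.ofReal (2 ^ s * A * ρ ^ (s - a) / (1 - t ^ (s - a))) :=
  calc _ ≤ ∑' k : ℕ, ∫⁻ η in closedBall x₀ (2 * (ρ * t ^ k)) \ ball x₀ (ρ * t ^ k),
          ENNReal.ofReal (dist η x₀ ^ (-a)) ∂ν := lintegral_iUnion_le _ _
    _ ≤ ∑' k : ℕ, ENNReal.ofReal (2 ^ s * A * ρ ^ (s - a) * (t ^ (s - a)) ^ k) := by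
        gcongr with k
        refine (hν.setLIntegral_annulus_le ha x₀ (by positivity)).trans_eq ?_
        rw [Real.mul_rpow hρ.le (by positivity), ← Real.rpow_pow_comm ht.le]
        ring_nf
    _ = _ := ENNReal.tsum_ofReal_mul_pow (by positivity) (by positivity) hq

theorem IsUpperRegular.setLIntegral_closedBall_le (hν : IsUpperRegular ν s A) (hA : 0 ≤ A)
    (ha : 0 < a) (has : a < s) (x₀ : X) {ρ : ℝ} (hρ : 0 < ρ) :
    ∫⁻ η in closedBall x₀ ρ, ENNReal.ofReal (dist η x₀ ^ (-a)) ∂ν ≤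
      ENNReal.ofReal (2 ^ a / (1 - 2 ^ (a - s)) * A * ρ ^ (s - a)) := by
  have hq : (1 / 2 : ℝ) ^ (s - a) < 1 :=
    Real.rpow_lt_one (by norm_num) (by norm_num) (sub_pos.2 has)
  calc _ ≤ ∫⁻ η in closedBall x₀ 0 ∪ ⋃ k : ℕ, closedBall x₀ (2 * (ρ / 2 * (1 / 2) ^ k)) \
          ball x₀ (ρ / 2 * (1 / 2) ^ k), ENNReal.ofReal (dist η x₀ ^ (-a)) ∂ν :=
        lintegral_mono_set (closedBall_subset_union_iUnion_annuli x₀ ρ)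
    _ ≤ 0 + ENNReal.ofReal (2 ^ s * A * (ρ / 2) ^ (s - a) / (1 - (1 / 2) ^ (s - a))) := by
        refine (lintegral_union_le _ _ _).trans (add_le_add ?_
          (hν.setLIntegral_iUnion_annuli_le hA ha.le x₀ (by positivity) (by norm_num) hq))
        refine (setLIntegral_mono measurable_const fun η hη => ?_).trans_eq lintegral_zero
        rw [le_antisymm (mem_closedBall.1 hη) dist_nonneg, Real.zero_rpow (by linarith)]
        simp
    _ = _ := by
        have h₂ : (2 : ℝ) ^ a = 2 ^ s / 2 ^ (s - a) := by
          rw [← Real.rpow_sub two_pos, sub_sub_cancel]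
        rw [zero_add, Real.div_rpow hρ.le zero_le_two, Real.div_rpow zero_le_one zero_le_two,
          Real.one_rpow, h₂, show a - s = -(s - a) by ring, Real.rpow_neg zero_le_two]
        field_simp

theorem IsUpperRegular.setLIntegral_compl_closedBall_le (hν : IsUpperRegular ν s A) (hA : 0 ≤ A)
    (hs : 0 ≤ s) {b : ℝ} (hsb : s < b) (x₀ : X) {R : ℝ} (hR : 0 < R) :
    ∫⁻ η in (closedBall x₀ R)ᶜ, ENNReal.ofReal (dist η x₀ ^ (-b)) ∂ν ≤
      ENNReal.ofReal (2 ^ s * A * R ^ (s - b) / (1 - 2 ^ (s - b))) :=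
  (lintegral_mono_set (compl_closedBall_subset_iUnion_annuli x₀ hR)).trans
    (hν.setLIntegral_iUnion_annuli_le hA (by linarith) x₀ hR two_pos
      (Real.rpow_lt_one_of_one_lt_of_neg one_lt_two (by linarith)))

end Annuli

theorem LipschitzWith.hausdorffMeasure_image_closedBall_le {ι Y : Type*} [Fintype ι]
    [EMetricSpace Y] [MeasurableSpace Y] [BorelSpace Y] {f : (ι → ℝ) → Y} {K : ℝ≥0}
    (hf : LipschitzWith K f) (z : ι → ℝ) {ρ : ℝ} (hρ : 0 ≤ ρ) :
    μH[Fintype.card ι] (f '' closedBall z ρ) ≤ ENNReal.ofReal ((2 * K * ρ) ^ Fintype.card ι) :=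
  calc μH[Fintype.card ι] (f '' closedBall z ρ)
      ≤ (K : ℝ≥0∞) ^ (Fintype.card ι : ℝ) * μH[Fintype.card ι] (closedBall z ρ) :=
        hf.lipschitzOnWith.hausdorffMeasure_image_le (Nat.cast_nonneg _)
    _ = ENNReal.ofReal ((2 * K * ρ) ^ Fintype.card ι) := by
        rw [hausdorffMeasure_pi_real, Real.volume_pi_closedBall z hρ, ENNReal.rpow_natCast,
          ← ENNReal.ofReal_coe_nnreal, ← ENNReal.ofReal_pow K.coe_nonneg,
          ← ENNReal.ofReal_mul (by positivity), ← mul_pow]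
        ring_nf

section Geometry

variable {E : Type*} [NormedAddCommGroup E] [InnerProductSpace ℝ E]

noncomputable def radialProjection (c : E) (R : ℝ) (y : E) : E :=
  c + (R / ‖y - c‖) • (y - c)

def sphereCap (c : E) (R : ℝ) (u : E) (τ δ : ℝ) : Set E :=
  {p ∈ sphere c R | τ ≤ ⟪p - c, u⟫ ∧ dist p (c + R • u) ≤ δ}

theorem norm_div_norm_smul_sub_div_norm_smul_le {v w : E} {R : ℝ} (hR : 0 ≤ R) (hv : R ≤ ‖v‖)
    (hw : R ≤ ‖w‖) : ‖(R / ‖v‖) • v - (R / ‖w‖) • w‖ ≤ ‖v - w‖ := by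
  rcases hR.eq_or_lt with rfl | hR
  · simp
  have ha : 0 < ‖v‖ := hR.trans_le hv
  have hb : 0 < ‖w‖ := hR.trans_le hw
  have hγ : ⟪v, w⟫ ≤ ‖v‖ * ‖w‖ := real_inner_le_norm v w
  rw [← pow_le_pow_iff_left₀ (norm_nonneg _) (norm_nonneg _) two_ne_zero, norm_sub_sq_real,
    norm_sub_sq_real, norm_smul, norm_smul, real_inner_smul_left, real_inner_smul_right,
    Real.norm_of_nonneg (by positivity), Real.norm_of_nonneg (by positivity)]
  -- with `a = ‖v‖`, `b = ‖w‖` the squared sides differ by `(a - b)² + 2 (ab - R²)(1 - ⟪v, w⟫ / ab)`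
  have key : 0 ≤ (‖v‖ - ‖w‖) ^ 2 * (‖v‖ * ‖w‖) +
      2 * (‖v‖ * ‖w‖ - R ^ 2) * (‖v‖ * ‖w‖ - ⟪v, w⟫) := by
    have : 0 ≤ ‖v‖ * ‖w‖ - R ^ 2 := by nlinarith
    have : 0 ≤ ‖v‖ * ‖w‖ - ⟪v, w⟫ := by linarith
    positivity
  field_simp
  nlinarith [key]

theorem lipschitzOnWith_radialProjection (c : E) {R : ℝ} (hR : 0 ≤ R) :
    LipschitzOnWith 1 (radialProjection c R) {y | R ≤ ‖y - c‖} :=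
  LipschitzOnWith.of_dist_le_mul fun y hy y' hy' => by
    simpa [radialProjection, dist_eq_norm] using norm_div_norm_smul_sub_div_norm_smul_le hR hy hy'

theorem sphereCap_subset_image_radialProjection (c : E) {u : E} (hu : ‖u‖ = 1) {R τ δ : ℝ}
    (hτ : 0 < τ) :
    sphereCap c R u τ δ ⊆ radialProjection c R ''
      (AffineSubspace.mk' (c + R • u) (ℝ ∙ u)ᗮ ∩ closedBall (c + R • u) (R * δ / τ)) := by
  -- `p` is the projection of the point `c + (R / t) • (p - c)` where the ray from `c` through `p`
  -- meets the tangent plane at the pole `c + R • u`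
  rintro p ⟨hp, hτt, hδp⟩
  set t := ⟪p - c, u⟫ with ht_def
  have ht : 0 < t := hτ.trans_le hτt
  have hpc : ‖p - c‖ = R := mem_sphere_iff_norm.1 hp
  have hR : 0 < R := hpc ▸ ht.trans_le ((real_inner_le_norm _ _).trans_eq (by rw [hu, mul_one]))
  have hpu : ‖p - c - t • u‖ ≤ dist p (c + R • u) := by
    rw [dist_eq_norm, ← pow_le_pow_iff_left₀ (norm_nonneg _) (norm_nonneg _) two_ne_zero,
      show p - (c + R • u) = p - c - R • u by abel, norm_sub_sq_real (p - c),
      norm_sub_sq_real (p - c), real_inner_smul_right, real_inner_smul_right, ← ht_def,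
      norm_smul, norm_smul, hu, hpc, mul_one, mul_one, Real.norm_eq_abs, Real.norm_eq_abs,
      sq_abs, sq_abs]
    nlinarith [sq_nonneg (R - t)]
  have hy : c + (R / t) • (p - c) - (c + R • u) = (R / t) • (p - c - t • u) := by
    rw [smul_sub (R / t) (p - c), smul_smul, div_mul_cancel₀ R ht.ne']
    abel
  refine ⟨c + (R / t) • (p - c), ⟨AffineSubspace.mem_mk'.2 ?_, ?_⟩, ?_⟩
  · rw [vsub_eq_sub, hy, Submodule.mem_orthogonal_singleton_iff_inner_left, real_inner_smul_left,
      inner_sub_left, real_inner_smul_left, real_inner_self_eq_norm_sq, hu, ← ht_def]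
    ring
  · rw [mem_closedBall, dist_eq_norm, hy, norm_smul, Real.norm_of_nonneg (by positivity)]
    calc R / t * ‖p - c - t • u‖ ≤ R / τ * δ := by
          gcongr
          exact hpu.trans hδp
      _ = R * δ / τ := by ring
  · simp only [radialProjection, add_sub_cancel_left, norm_smul, hpc, smul_smul,
      Real.norm_of_nonneg (by positivity : 0 ≤ R / t)]
    rw [show R / (R / t * R) * (R / t) = 1 by field_simp, one_smul, add_sub_cancel]

theorem sphere_inter_closedBall_subset_sphereCap {c x u : E} (hu : ‖u‖ = 1)
    (hxu : x - c = ‖x - c‖ • u) {R r : ℝ} (hR : 0 < R) (hRr : 2 * r ≤ R) :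
    sphere c R ∩ closedBall x r ⊆ sphereCap c R u (R / 2) (2 * r) := by
  rintro p ⟨hp, hpx⟩
  have hpc : ‖p - c‖ = R := mem_sphere_iff_norm.1 hp
  have hpole : dist p (c + R • u) ≤ 2 * r := by
    calc dist p (c + R • u) ≤ dist p x + dist x (c + R • u) := dist_triangle _ _ _
      _ ≤ r + r := by
        gcongr
        · exact mem_closedBall.1 hpx
        rw [dist_eq_norm, show x - (c + R • u) = (‖x - c‖ - R) • u by rw [sub_smul, ← hxu]; abel,
          norm_smul, hu, mul_one, Real.norm_eq_abs, ← hpc]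
        refine (abs_norm_sub_norm_le _ _).trans ?_
        rw [sub_sub_sub_cancel_right, ← dist_eq_norm, dist_comm]
        exact mem_closedBall.1 hpx
      _ = 2 * r := by ring
  refine ⟨hp, ?_, hpole⟩
  have hsq : dist p (c + R • u) ^ 2 = 2 * R ^ 2 - 2 * R * ⟪p - c, u⟫ := by
    rw [dist_eq_norm, show p - (c + R • u) = p - c - R • u by abel, norm_sub_sq_real,
      real_inner_smul_right, norm_smul, hu, hpc, Real.norm_of_nonneg hR.le]
    ring
  nlinarith [dist_nonneg (x := p) (y := c + R • u)]

theorem sphere_subset_iUnion_sphereCap {ι : Type*} [Fintype ι] [Nonempty ι]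
    (b : OrthonormalBasis ι ℝ E) (c : E) {R : ℝ} (hR : 0 ≤ R) :
    sphere c R ⊆ ⋃ i, (sphereCap c R (b i) (R / Fintype.card ι) (2 * R) ∪
      sphereCap c R (-b i) (R / Fintype.card ι) (2 * R)) := by
  intro p hp
  have hpc : ‖p - c‖ = R := mem_sphere_iff_norm.1 hp
  have hι : (1 : ℝ) ≤ Fintype.card ι := Nat.one_le_cast.2 Fintype.card_pos
  -- pigeonhole on `∑ i, ⟪b i, p - c⟫ ^ 2 = R ^ 2`
  obtain ⟨i, -, hi⟩ := Finset.exists_le_of_sum_le Finset.univ_nonempty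
    (f := fun _ => R ^ 2 / Fintype.card ι) (g := fun i => ⟪b i, p - c⟫ ^ 2) (by
      rw [b.sum_sq_inner_right, hpc, Finset.sum_const, Finset.card_univ, nsmul_eq_mul]
      exact (mul_div_cancel₀ _ (by positivity)).le)
  have hi' : R / Fintype.card ι ≤ |⟪p - c, b i⟫| := by
    rw [real_inner_comm, ← abs_of_nonneg (by positivity : 0 ≤ R / Fintype.card ι)]
    refine sq_le_sq.1 (le_trans ?_ hi)
    rw [div_pow]
    exact div_le_div_of_nonneg_left (by positivity) (by positivity) (by nlinarith)
  have hdist : ∀ u : E, ‖u‖ = 1 → dist p (c + R • u) ≤ 2 * R := fun u hu => by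
    calc dist p (c + R • u) ≤ dist p c + dist c (c + R • u) := dist_triangle _ _ _
      _ = 2 * R := by
        rw [dist_eq_norm p, hpc, dist_eq_norm, sub_add_cancel_left, norm_neg, norm_smul, hu,
          Real.norm_of_nonneg hR]
        ring
  refine mem_iUnion.2 ⟨i, ?_⟩
  rcases le_or_gt 0 ⟪p - c, b i⟫ with h | h
  · exact Or.inl ⟨hp, by rwa [abs_of_nonneg h] at hi', hdist _ (b.orthonormal.1 i)⟩
  · refine Or.inr ⟨hp, by rwa [abs_of_neg h, ← inner_neg_right] at hi', hdist _ ?_⟩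
    rw [norm_neg]
    exact b.orthonormal.1 i

variable [MeasurableSpace E] [BorelSpace E]

theorem hausdorffMeasure_affineSubspace_inter_closedBall_le (L : AffineSubspace ℝ E)
    [FiniteDimensional ℝ L.direction] {n : ℕ} (hL : finrank ℝ L.direction = n) (x : E) {r : ℝ}
    (hr : 0 ≤ r) : μH[n] ((L : Set E) ∩ closedBall x r) ≤ ENNReal.ofReal ((4 * n * r) ^ n) := by
  rcases eq_empty_or_nonempty ((L : Set E) ∩ closedBall x r) with h | ⟨q, hqL, hqB⟩
  · simp [h]
  let b : OrthonormalBasis (Fin n) ℝ L.direction := (stdOrthonormalBasis ℝ _).reindex (finCongr hL)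
  let φ : (Fin n → ℝ) → E := fun t => q + ∑ i, t i • (b i : E)
  have hφ : LipschitzWith n φ := by
    refine LipschitzWith.of_dist_le_mul fun t t' => ?_
    simp only [φ, dist_eq_norm, add_sub_add_left_eq_sub, ← Finset.sum_sub_distrib, ← sub_smul]
    calc ‖∑ i, (t i - t' i) • (b i : E)‖ ≤ ∑ i, ‖(t i - t' i) • (b i : E)‖ := norm_sum_le _ _
      _ ≤ ∑ _ : Fin n, ‖t - t'‖ := by
          gcongr with i
          rw [norm_smul, show ‖(b i : E)‖ = 1 from b.orthonormal.1 i, mul_one]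
          exact norm_le_pi_norm (t - t') i
      _ = n * ‖t - t'‖ := by simp
  have hsub : (L : Set E) ∩ closedBall x r ⊆ φ '' closedBall 0 (2 * r) := by
    rintro y ⟨hyL, hyB⟩
    let v : L.direction := ⟨y -ᵥ q, L.vsub_mem_direction hyL hqL⟩
    refine ⟨fun i => b.repr v i, ?_, ?_⟩
    · refine mem_closedBall_zero_iff.2 ((pi_norm_le_iff_of_nonneg (by positivity)).2 fun i => ?_)
      calc ‖b.repr v i‖ ≤ ‖b.repr v‖ := PiLp.norm_apply_le _ i
        _ = dist y q := by rw [b.repr.norm_map, dist_eq_norm_vsub]; rfl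
        _ ≤ dist y x + dist q x := dist_triangle_right _ _ _
        _ ≤ 2 * r := by linarith [mem_closedBall.1 hyB, mem_closedBall.1 hqB]
    · have hv := congrArg Subtype.val (b.sum_repr v)
      simp only [Submodule.coe_sum, Submodule.coe_smul] at hv
      simp only [φ]
      rw [hv]
      exact add_sub_cancel q y
  calc μH[n] ((L : Set E) ∩ closedBall x r) ≤ μH[n] (φ '' closedBall 0 (2 * r)) :=
        measure_mono hsub
    _ ≤ ENNReal.ofReal ((4 * n * r) ^ n) := by
        have := hφ.hausdorffMeasure_image_closedBall_le 0 (by positivity : 0 ≤ 2 * r)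
        simp only [Fintype.card_fin, NNReal.coe_natCast] at this
        refine this.trans_eq ?_
        ring_nf

theorem hausdorffMeasure_sphereCap_le [FiniteDimensional ℝ E] {n : ℕ} (hE : finrank ℝ E = n + 1)
    (c : E) {u : E} (hu : ‖u‖ = 1) {R τ δ : ℝ} (hR : 0 ≤ R) (hτ : 0 < τ) (hδ : 0 ≤ δ) :
    μH[n] (sphereCap c R u τ δ) ≤ ENNReal.ofReal ((4 * n * (R * δ / τ)) ^ n) := by
  set T := AffineSubspace.mk' (c + R • u) (ℝ ∙ u)ᗮ
  have hT : finrank ℝ T.direction = n := by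
    have := (ℝ ∙ u).finrank_add_finrank_orthogonal
    rw [finrank_span_singleton (norm_ne_zero_iff.1 (by rw [hu]; exact one_ne_zero)), hE] at this
    rw [AffineSubspace.direction_mk']
    omega
  have hTc : ∀ y ∈ T, R ≤ ‖y - c‖ := by
    intro y hy
    have hyu : ⟪y - (c + R • u), u⟫ = 0 :=
      Submodule.mem_orthogonal_singleton_iff_inner_left.1 (AffineSubspace.mem_mk'.1 hy)
    have : ‖y - c‖ ^ 2 = ‖y - (c + R • u)‖ ^ 2 + R ^ 2 := by
      rw [show y - c = y - (c + R • u) + R • u by abel, norm_add_sq_real, real_inner_smul_right,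
        hyu, norm_smul, hu, Real.norm_of_nonneg hR]
      ring
    nlinarith [norm_nonneg (y - c), norm_nonneg (y - (c + R • u))]
  calc μH[n] (sphereCap c R u τ δ)
      ≤ μH[n] (radialProjection c R '' ((T : Set E) ∩ closedBall (c + R • u) (R * δ / τ))) :=
        measure_mono (sphereCap_subset_image_radialProjection c hu hτ)
    _ ≤ (1 : ℝ≥0) ^ (n : ℝ) * μH[n] ((T : Set E) ∩ closedBall (c + R • u) (R * δ / τ)) :=
        ((lipschitzOnWith_radialProjection c hR).mono fun y hy =>
          hTc y hy.1).hausdorffMeasure_image_le (Nat.cast_nonneg n)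
    _ ≤ _ := by
        rw [ENNReal.coe_one, ENNReal.one_rpow, one_mul]
        exact hausdorffMeasure_affineSubspace_inter_closedBall_le T hT _ (by positivity)

theorem hausdorffMeasure_sphere_le [FiniteDimensional ℝ E] {n : ℕ} (hE : finrank ℝ E = n + 1)
    (c : E) {R : ℝ} (hR : 0 < R) :
    μH[n] (sphere c R) ≤ ENNReal.ofReal (2 * (n + 1) * (8 * n * (n + 1) * R) ^ n) := by
  let b : OrthonormalBasis (Fin (n + 1)) ℝ E := (stdOrthonormalBasis ℝ E).reindex (finCongr hE)
  have hcap : ∀ u : E, ‖u‖ = 1 → μH[n] (sphereCap c R u (R / (n + 1)) (2 * R)) ≤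
      ENNReal.ofReal ((8 * n * (n + 1) * R) ^ n) := fun u hu =>
    (hausdorffMeasure_sphereCap_le hE c hu hR.le (by positivity) (by positivity)).trans_eq
      (by congr 2; field_simp; ring)
  have hcover := sphere_subset_iUnion_sphereCap b c hR.le
  rw [Fintype.card_fin, Nat.cast_add_one] at hcover
  calc μH[n] (sphere c R)
      ≤ ∑ i, μH[n] (sphereCap c R (b i) (R / (n + 1)) (2 * R) ∪
          sphereCap c R (-b i) (R / (n + 1)) (2 * R)) :=
        (measure_mono hcover).trans (measure_iUnion_fintype_le _ _)
    _ ≤ ∑ _ : Fin (n + 1), 2 * ENNReal.ofReal ((8 * n * (n + 1) * R) ^ n) := by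
        gcongr with i
        refine (measure_union_le _ _).trans ((add_le_add (hcap _ (b.orthonormal.1 i))
          (hcap _ ?_)).trans_eq (two_mul _).symm)
        rw [norm_neg]
        exact b.orthonormal.1 i
    _ = _ := by
        rw [Finset.sum_const, Finset.card_univ, Fintype.card_fin, nsmul_eq_mul,
          ← ENNReal.ofReal_ofNat, ← ENNReal.ofReal_natCast, ← ENNReal.ofReal_mul (by positivity),
          ← ENNReal.ofReal_mul (by positivity)]
        push_cast
        ring_nf

theorem hausdorffMeasure_sphere_inter_closedBall_le [FiniteDimensional ℝ E] {n : ℕ}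
    (hE : finrank ℝ E = n + 1) (c x : E) {R r : ℝ} (hR : 0 < R) (hr : 0 < r) :
    μH[n] (sphere c R ∩ closedBall x r) ≤
      ENNReal.ofReal (2 * (n + 1) * (16 * n * (n + 1) * r) ^ n) := by
  rcases lt_or_ge R (2 * r) with hRr | hRr
  · refine (measure_mono inter_subset_left).trans <|
      (hausdorffMeasure_sphere_le hE c hR).trans (ENNReal.ofReal_le_ofReal ?_)
    have : 8 * n * (n + 1) * R ≤ 16 * n * (n + 1) * r := by
      rw [show 16 * (n : ℝ) * (n + 1) * r = 8 * n * (n + 1) * (2 * r) by ring]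
      gcongr
    gcongr 2 * (n + 1) * ?_ ^ n
  have : Nontrivial E := Module.nontrivial_of_finrank_eq_succ hE
  obtain ⟨u, hu, hxu⟩ : ∃ u : E, ‖u‖ = 1 ∧ x - c = ‖x - c‖ • u := by
    rcases eq_or_ne x c with rfl | hxc
    · obtain ⟨u, hu⟩ := exists_norm_eq E zero_le_one
      exact ⟨u, hu, by simp⟩
    · have hxc' : x - c ≠ 0 := sub_ne_zero.2 hxc
      refine ⟨‖x - c‖⁻¹ • (x - c), norm_smul_inv_norm hxc', ?_⟩
      rw [smul_smul, mul_inv_cancel₀ (norm_ne_zero_iff.2 hxc'), one_smul]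
  refine (measure_mono (sphere_inter_closedBall_subset_sphereCap hu hxu hR hRr)).trans <|
    (hausdorffMeasure_sphereCap_le hE c hu hR.le (by positivity) (by positivity)).trans
      (ENNReal.ofReal_le_ofReal ?_)
  calc (4 * n * (R * (2 * r) / (R / 2))) ^ n = (16 * n * 1 * r) ^ n := by field_simp; ring
    _ ≤ (16 * n * (n + 1) * r) ^ n := by gcongr; linarith
    _ ≤ 2 * (n + 1) * (16 * n * (n + 1) * r) ^ n :=
        le_mul_of_one_le_left (by positivity) (by linarith [(n.cast_nonneg : (0 : ℝ) ≤ n)])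

end Geometry

section Kernel

variable {E : Type*} [NormedAddCommGroup E] [NormedSpace ℝ E] {p r : ℝ} {ξ : E}

noncomputable def kmKernel (p : ℝ) (ξ η : E) : ℝ :=
  1 / (‖(2 : ℝ)⁻¹ • ξ - η‖ * ‖ξ - η‖ ^ p * ‖η‖ ^ p)

-- also at the singular points, where both sides vanish (`1 / 0 = 0` and `0 ^ (-a) = 0`)
theorem kmKernel_eq (p : ℝ) (ξ η : E) : kmKernel p ξ η =
    dist η ((2 : ℝ)⁻¹ • ξ) ^ (-1 : ℝ) * dist η ξ ^ (-p) * dist η 0 ^ (-p) := by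
  rw [kmKernel, dist_eq_norm', dist_eq_norm', dist_zero_right, Real.rpow_neg_one,
    Real.rpow_neg (norm_nonneg _), Real.rpow_neg (norm_nonneg _), one_div, mul_inv, mul_inv]

theorem dist_half_smul_zero (ξ : E) : dist ((2 : ℝ)⁻¹ • ξ) 0 = ‖ξ‖ / 2 := by
  rw [dist_zero_right, norm_smul]; norm_num; ring

theorem dist_half_smul_self (ξ : E) : dist ((2 : ℝ)⁻¹ • ξ) ξ = ‖ξ‖ / 2 := by
  rw [dist_eq_norm', show ξ - (2 : ℝ)⁻¹ • ξ = (2 : ℝ)⁻¹ • ξ by module, ← dist_zero_right,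
    dist_half_smul_zero]

variable [MeasurableSpace E] [OpensMeasurableSpace E] {ν : Measure E} {A : ℝ}

theorem IsUpperRegular.setLIntegral_closedBall_half_kmKernel_le (hν : IsUpperRegular ν 2 A)
    (hA : 0 ≤ A) (hp : 0 ≤ p) (hr : 0 < r) (hξ : ‖ξ‖ = 4 * r) :
    ∫⁻ η in closedBall ((2 : ℝ)⁻¹ • ξ) r, ENNReal.ofReal (kmKernel p ξ η) ∂ν ≤
      ENNReal.ofReal (4 * A * r ^ (1 - 2 * p)) := by
  refine (setLIntegral_ofReal_le_of_le_mul (M := r ^ (-p) * r ^ (-p)) measurableSet_closedBall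
    (by positivity) (fun η hη => ?_)
    (hν.setLIntegral_closedBall_le hA one_pos one_lt_two _ hr)).trans_eq ?_
  · have h₀ := dist_half_smul_zero ξ
    have h₁ := dist_half_smul_self ξ
    have hη' := mem_closedBall.1 hη
    rw [kmKernel_eq, mul_assoc, mul_comm (r ^ (-p) * r ^ (-p))]
    gcongr _ * (?_ * ?_) <;> refine Real.rpow_le_rpow_of_nonpos hr ?_ (neg_nonpos.2 hp)
    · linarith [dist_triangle ((2 : ℝ)⁻¹ • ξ) η ξ, dist_comm η ((2 : ℝ)⁻¹ • ξ)]
    · linarith [dist_triangle ((2 : ℝ)⁻¹ • ξ) η 0, dist_comm η ((2 : ℝ)⁻¹ • ξ)]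
  · rw [show (1 : ℝ) - 2 = -1 by norm_num, Real.rpow_neg_one, Real.rpow_one,
      show 1 - 2 * p = -p + -p + (2 - 1) by ring, Real.rpow_add hr, Real.rpow_add hr]
    ring_nf

theorem IsUpperRegular.setLIntegral_closedBall_kmKernel_le (hν : IsUpperRegular ν 2 A)
    (hA : 0 ≤ A) (hp₀ : 0 < p) (hp₂ : p < 2) (hr : 0 < r) (hξ : ‖ξ‖ = 4 * r) {x₀ : E}
    (hx₀ : x₀ = 0 ∨ x₀ = ξ) :
    ∫⁻ η in closedBall x₀ r, ENNReal.ofReal (kmKernel p ξ η) ∂ν ≤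
      ENNReal.ofReal (2 ^ p / (1 - 2 ^ (p - 2)) * A * r ^ (1 - 2 * p)) := by
  refine (setLIntegral_ofReal_le_of_le_mul (M := r ^ (-1 : ℝ) * r ^ (-p)) measurableSet_closedBall
    (by positivity) (fun η hη => ?_)
    (hν.setLIntegral_closedBall_le hA hp₀ hp₂ _ hr)).trans_eq ?_
  · have hη' := mem_closedBall.1 hη
    have h₁ : r ≤ dist η ((2 : ℝ)⁻¹ • ξ) := by
      have : dist ((2 : ℝ)⁻¹ • ξ) x₀ = ‖ξ‖ / 2 := by
        rcases hx₀ with h | h <;> subst x₀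
        exacts [dist_half_smul_zero ξ, dist_half_smul_self ξ]
      linarith [dist_triangle ((2 : ℝ)⁻¹ • ξ) η x₀, dist_comm η ((2 : ℝ)⁻¹ • ξ)]
    have hξ₀ : dist ξ 0 = 4 * r := by rw [dist_zero_right, hξ]
    rw [kmKernel_eq]
    rcases hx₀ with h | h <;> subst x₀
    · have h₂ : r ≤ dist η ξ := by linarith [dist_triangle ξ η 0, dist_comm η ξ]
      gcongr ?_ * ?_ * _
      exacts [Real.rpow_le_rpow_of_nonpos hr h₁ (by norm_num),
        Real.rpow_le_rpow_of_nonpos hr h₂ (neg_nonpos.2 hp₀.le)]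
    · have h₃ : r ≤ dist η 0 := by linarith [dist_triangle ξ η 0, dist_comm η ξ]
      rw [mul_right_comm]
      gcongr ?_ * ?_ * _
      exacts [Real.rpow_le_rpow_of_nonpos hr h₁ (by norm_num),
        Real.rpow_le_rpow_of_nonpos hr h₃ (neg_nonpos.2 hp₀.le)]
  · rw [show 1 - 2 * p = -1 + -p + (2 - p) by ring, Real.rpow_add hr, Real.rpow_add hr]
    ring_nf

theorem IsUpperRegular.setLIntegral_kmKernel_middle_le (hν : IsUpperRegular ν 2 A)
    (hp : 0 ≤ p) (hr : 0 < r) :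
    ∫⁻ η in closedBall 0 (8 * r) \
        (closedBall ((2 : ℝ)⁻¹ • ξ) r ∪ closedBall 0 r ∪ closedBall ξ r),
        ENNReal.ofReal (kmKernel p ξ η) ∂ν ≤
      ENNReal.ofReal (64 * A * r ^ (1 - 2 * p)) := by
  refine (setLIntegral_ofReal_le_of_le_mul (g := fun _ => 1)
    (M := r ^ (-1 : ℝ) * r ^ (-p) * r ^ (-p)) (B := A * (8 * r) ^ (2 : ℝ))
    (measurableSet_closedBall.diff (by measurability)) (by positivity) (fun η hη => ?_)
    ?_).trans_eq ?_
  · simp only [mem_sdiff, mem_union, mem_closedBall, not_or, not_le] at hη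
    rw [kmKernel_eq, mul_one]
    gcongr ?_ * ?_ * ?_ <;> refine Real.rpow_le_rpow_of_nonpos hr ?_ (by linarith)
    exacts [hη.2.1.1.le, hη.2.2.le, hη.2.1.2.le]
  · simp only [ENNReal.ofReal_one, setLIntegral_const, one_mul]
    exact (measure_mono sdiff_subset).trans (hν 0 _ (by positivity))
  · rw [Real.mul_rpow (by norm_num) hr.le, show 1 - 2 * p = -1 + -p + -p + 2 by ring,
      Real.rpow_add hr, Real.rpow_add hr, Real.rpow_add hr]
    norm_num
    ring_nf

theorem IsUpperRegular.setLIntegral_compl_closedBall_kmKernel_le (hν : IsUpperRegular ν 2 A)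
    (hA : 0 ≤ A) (hp : 1 / 2 < p) (hr : 0 < r) (hξ : ‖ξ‖ = 4 * r) :
    ∫⁻ η in (closedBall 0 (8 * r))ᶜ, ENNReal.ofReal (kmKernel p ξ η) ∂ν ≤
      ENNReal.ofReal (2 ^ (1 + p) * 4 * 8 ^ (1 - 2 * p) / (1 - 2 ^ (1 - 2 * p)) * A *
        r ^ (1 - 2 * p)) := by
  refine (setLIntegral_ofReal_le_of_le_mul (M := 2 ^ (1 + p))
    measurableSet_closedBall.compl (by positivity) (fun η hη => ?_)
    (hν.setLIntegral_compl_closedBall_le hA zero_le_two (by linarith : (2 : ℝ) < 1 + 2 * p) 0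
      (by positivity))).trans_eq ?_
  · have hd : 8 * r < dist η 0 := not_le.1 (mt mem_closedBall.2 hη)
    have hd₀ : 0 < dist η 0 := by linarith
    have h₀ := dist_half_smul_zero ξ
    have hξ₀ : dist ξ 0 = 4 * r := by rw [dist_zero_right, hξ]
    have h₁ : dist η 0 / 2 ≤ dist η ((2 : ℝ)⁻¹ • ξ) := by
      linarith [dist_triangle η ((2 : ℝ)⁻¹ • ξ) 0]
    have h₂ : dist η 0 / 2 ≤ dist η ξ := by linarith [dist_triangle η ξ 0]
    calc kmKernel p ξ η
        ≤ (dist η 0 / 2) ^ (-1 : ℝ) * (dist η 0 / 2) ^ (-p) * dist η 0 ^ (-p) := by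
          rw [kmKernel_eq]
          gcongr ?_ * ?_ * _
          exacts [Real.rpow_le_rpow_of_nonpos (by positivity) h₁ (by norm_num),
            Real.rpow_le_rpow_of_nonpos (by positivity) h₂ (by linarith)]
      _ = 2 ^ (1 + p) * dist η 0 ^ (-(1 + 2 * p)) := by
          rw [Real.div_rpow hd₀.le zero_le_two, Real.div_rpow hd₀.le zero_le_two,
            Real.rpow_neg zero_le_two, Real.rpow_neg zero_le_two, div_inv_eq_mul, div_inv_eq_mul,
            show -(1 + 2 * p) = -1 + -p + -p by ring, Real.rpow_add hd₀, Real.rpow_add hd₀,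
            Real.rpow_add two_pos]
          ring
  · rw [show (2 : ℝ) - (1 + 2 * p) = 1 - 2 * p by ring, Real.mul_rpow (by norm_num) hr.le,
      Real.rpow_two]
    ring_nf

noncomputable def kmConstant (p : ℝ) : ℝ :=
  4 + 2 * (2 ^ p / (1 - 2 ^ (p - 2))) + 64 +
    2 ^ (1 + p) * 4 * 8 ^ (1 - 2 * p) / (1 - 2 ^ (1 - 2 * p))

theorem kmConstant_pos (hp₁ : 1 / 2 < p) (hp₂ : p < 2) : 0 < kmConstant p := by
  have h₁ : 0 < 1 - (2 : ℝ) ^ (p - 2) :=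
    sub_pos.2 (Real.rpow_lt_one_of_one_lt_of_neg one_lt_two (by linarith))
  have h₄ : 0 < 1 - (2 : ℝ) ^ (1 - 2 * p) :=
    sub_pos.2 (Real.rpow_lt_one_of_one_lt_of_neg one_lt_two (by linarith))
  unfold kmConstant
  positivity

theorem IsUpperRegular.lintegral_kmKernel_le (hν : IsUpperRegular ν 2 A) (hA : 0 ≤ A)
    (hp₁ : 1 / 2 < p) (hp₂ : p < 2) (hr : 0 < r) (hξ : ‖ξ‖ = 4 * r) :
    ∫⁻ η, ENNReal.ofReal (kmKernel p ξ η) ∂ν ≤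
      ENNReal.ofReal (kmConstant p * A * r ^ (1 - 2 * p)) := by
  have h₁ : 0 ≤ 2 ^ p / (1 - (2 : ℝ) ^ (p - 2)) := div_nonneg (by positivity)
    (sub_nonneg.2 (Real.rpow_le_one_of_one_le_of_nonpos one_le_two (by linarith)))
  have h₄ : 0 ≤ 2 ^ (1 + p) * 4 * 8 ^ (1 - 2 * p) / (1 - (2 : ℝ) ^ (1 - 2 * p)) :=
    div_nonneg (by positivity)
      (sub_nonneg.2 (Real.rpow_le_one_of_one_le_of_nonpos one_le_two (by linarith)))
  set B := closedBall ((2 : ℝ)⁻¹ • ξ) r ∪ closedBall 0 r ∪ closedBall ξ r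
  have hcover : B ∪ (closedBall 0 (8 * r) \ B) ∪ (closedBall 0 (8 * r))ᶜ = univ := by
    rw [union_sdiff_self, union_assoc, union_compl_self, union_univ]
  calc ∫⁻ η, ENNReal.ofReal (kmKernel p ξ η) ∂ν
      = ∫⁻ η in B ∪ (closedBall 0 (8 * r) \ B) ∪ (closedBall 0 (8 * r))ᶜ,
          ENNReal.ofReal (kmKernel p ξ η) ∂ν := by rw [hcover, Measure.restrict_univ]
    _ ≤ ENNReal.ofReal (4 * A * r ^ (1 - 2 * p)) +
          ENNReal.ofReal (2 ^ p / (1 - 2 ^ (p - 2)) * A * r ^ (1 - 2 * p)) +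
          ENNReal.ofReal (2 ^ p / (1 - 2 ^ (p - 2)) * A * r ^ (1 - 2 * p)) +
          ENNReal.ofReal (64 * A * r ^ (1 - 2 * p)) +
          ENNReal.ofReal (2 ^ (1 + p) * 4 * 8 ^ (1 - 2 * p) / (1 - 2 ^ (1 - 2 * p)) * A *
            r ^ (1 - 2 * p)) := by
        refine (lintegral_union_le _ _ _).trans (add_le_add ?_
          (hν.setLIntegral_compl_closedBall_kmKernel_le hA hp₁ hr hξ))
        refine (lintegral_union_le _ _ _).trans (add_le_add ?_
          (hν.setLIntegral_kmKernel_middle_le (by linarith) hr))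
        refine (lintegral_union_le _ _ _).trans (add_le_add ?_
          (hν.setLIntegral_closedBall_kmKernel_le hA (by linarith) hp₂ hr hξ (Or.inr rfl)))
        exact (lintegral_union_le _ _ _).trans (add_le_add
          (hν.setLIntegral_closedBall_half_kmKernel_le hA (by linarith) hr hξ)
          (hν.setLIntegral_closedBall_kmKernel_le hA (by linarith) hp₂ hr hξ (Or.inl rfl)))
    _ = ENNReal.ofReal (kmConstant p * A * r ^ (1 - 2 * p)) := by
        rw [← ENNReal.ofReal_add (by positivity) (by positivity),
          ← ENNReal.ofReal_add (by positivity) (by positivity),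
          ← ENNReal.ofReal_add (by positivity) (by positivity),
          ← ENNReal.ofReal_add (by positivity) (by positivity), kmConstant]
        ring_nf

theorem exists_lintegral_kmKernel_le (hp₁ : 1 / 2 < p) (hp₂ : p < 2) :
    ∃ K > 0, ∀ (ν : Measure E) (A : ℝ), 0 ≤ A → IsUpperRegular ν 2 A → ∀ ξ : E, ξ ≠ 0 →
      ∫⁻ η, ENNReal.ofReal (kmKernel p ξ η) ∂ν ≤ ENNReal.ofReal (K * A / ‖ξ‖ ^ (2 * p - 1)) := by
  refine ⟨kmConstant p * 4 ^ (2 * p - 1), mul_pos (kmConstant_pos hp₁ hp₂) (by positivity),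
    fun ν A hA hν ξ hξ => ?_⟩
  refine (hν.lintegral_kmKernel_le hA hp₁ hp₂ (r := ‖ξ‖ / 4) (by positivity) (by ring)).trans_eq ?_
  rw [Real.div_rpow (norm_nonneg ξ) zero_le_four, show 1 - 2 * p = -(2 * p - 1) by ring,
    Real.rpow_neg (norm_nonneg ξ), Real.rpow_neg zero_le_four]
  field_simp

end Kernel

/-- Second Klainerman–Machedon surface integral estimate, with `ε = 1/10`:
for any 2-dimensional plane or sphere `P ⊂ ℝ³` with its induced surface measure,
`∫_P dS(η)/(|ξ/2-η| |ξ-η|^{2-ε} |η|^{2-ε}) ≤ C/|ξ|^{3-2ε}`,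
with `C` independent of `P` and `ξ`. -/
theorem KM_surface_integral_estimate_two :
    ∃ C : ℝ, 0 < C ∧
      ∀ ξ : EuclideanSpace ℝ (Fin 3), ξ ≠ 0 →
        ∀ P : Set (EuclideanSpace ℝ (Fin 3)),
          ((∃ L : AffineSubspace ℝ (EuclideanSpace ℝ (Fin 3)),
              P = (L : Set (EuclideanSpace ℝ (Fin 3))) ∧ Module.finrank ℝ L.direction = 2) ∨
           (∃ (c : EuclideanSpace ℝ (Fin 3)) (r : ℝ), 0 < r ∧ P = Metric.sphere c r)) →
          (∫⁻ η in P,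
              ENNReal.ofReal
                (1 / (‖(2 : ℝ)⁻¹ • ξ - η‖ * ‖ξ - η‖ ^ (2 - (1/10 : ℝ)) *
                    ‖η‖ ^ (2 - (1/10 : ℝ)))) ∂(μH[2]))
            ≤ ENNReal.ofReal (C / ‖ξ‖ ^ (3 - 2 * (1/10 : ℝ))) := by
  obtain ⟨K, hK, hKν⟩ := exists_lintegral_kmKernel_le (E := EuclideanSpace ℝ (Fin 3))
    (p := 2 - 1 / 10) (by norm_num) (by norm_num)
  refine ⟨K * (6 * 96 ^ 2), by positivity, fun ξ hξ P hP => ?_⟩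
  have hreg : IsUpperRegular (μH[2].restrict P) 2 (6 * 96 ^ 2) := by
    intro x r hr
    rw [Measure.restrict_apply measurableSet_closedBall, inter_comm, Real.rpow_two]
    rcases hP with ⟨L, rfl, hL⟩ | ⟨c, R, hR, rfl⟩
    · have := hausdorffMeasure_affineSubspace_inter_closedBall_le L hL x hr.le
      simp only [Nat.cast_ofNat] at this
      exact this.trans (ENNReal.ofReal_le_ofReal (by nlinarith))
    · have := hausdorffMeasure_sphere_inter_closedBall_le (n := 2) finrank_euclideanSpace_fin
        c x hR hr
      simp only [Nat.cast_ofNat] at this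
      exact this.trans (ENNReal.ofReal_le_ofReal (by nlinarith))
  rw [show (3 : ℝ) - 2 * (1 / 10) = 2 * (2 - 1 / 10) - 1 by norm_num]
  exact hKν _ _ (by positivity) hreg ξ hξ
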